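/- Let A be a real symmetric n×n matrix with n distinct eigenvalues, and let P be a permutation matrix that is an automorphism of A, i.e., P A Pᵀ = A. Then P is symmetric and P² = I; in other words, every element of the automorphism group of such a graph has order 1 or 2. -/

import Mathlib

/-!
A permutation matrix `P` is orthogonal, so `P * A * Pᵀ = A` says that `P` commutes with `A`.
Then `P` preserves every eigenspace of `A`; these are lines because the `n` eigenvalues are
distinct, so `P` acts on an eigenbasis of `A` by scalars. An orthogonal matrix preserves lengths,
so these scalars are `±1`, whence `P * P = 1`, and `Pᵀ = P` because `Pᵀ` is the inverse of `P`.
-/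

open Matrix BigOperators

def IsPermMatrix {n : ℕ} (P : Matrix (Fin n) (Fin n) ℝ) : Prop :=
  (∀ i j, P i j = 0 ∨ P i j = 1) ∧ (∀ i, ∑ j, P i j = 1) ∧ (∀ j, ∑ i, P i j = 1)

def IsDoublyStochastic {n : ℕ} (P : Matrix (Fin n) (Fin n) ℝ) : Prop :=
  (∀ i j, 0 ≤ P i j) ∧ (∀ i, ∑ j, P i j = 1) ∧ (∀ j, ∑ i, P i j = 1)

theorem IsPermMatrix.transpose_mul_self {n : ℕ} {P : Matrix (Fin n) (Fin n) ℝ}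
    (hP : IsPermMatrix P) : Pᵀ * P = 1 := by
  obtain ⟨h01, hrow, hcol⟩ := hP
  ext i j
  simp only [mul_apply, transpose_apply, one_apply]
  split_ifs with hij
  · subst hij
    rw [← hcol i]
    refine Finset.sum_congr rfl fun k _ => ?_
    rcases h01 k i with h | h <;> simp [h]
  · refine Finset.sum_eq_zero fun k _ => ?_
    rcases h01 k i with hi | hi
    · simp [hi]
    rcases h01 k j with hj | hj
    · simp [hj]
    -- two entries equal to `1` in row `k` would make its sum at least `2`
    have : (2 : ℝ) ≤ ∑ l, P k l :=
      calc (2 : ℝ) = ∑ l ∈ {i, j}, P k l := by rw [Finset.sum_pair hij, hi, hj]; norm_num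
        _ ≤ ∑ l, P k l := Finset.sum_le_sum_of_subset_of_nonneg (Finset.subset_univ _)
              fun l _ _ => by rcases h01 k l with h | h <;> simp [h]
    linarith [hrow k]

namespace Module.End

variable {K V ι : Type*} [Field K] [AddCommGroup V] [Module K V] [Fintype ι]

theorem exists_eq_smul_of_apply_eq_smul {f : End K V} (b : Basis ι K V) {μ : ι → K}
    (hμ : Function.Injective μ) (hb : ∀ i, f (b i) = μ i • b i) {i : ι} {w : V}
    (hw : f w = μ i • w) : ∃ c : K, w = c • b i := by
  have hrepr : ∀ j, μ j * b.repr w j = μ i * b.repr w j := by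
    have hfw : f w = ∑ j, (μ j * b.repr w j) • b j := by
      conv_lhs => rw [← b.sum_repr w]
      simp only [map_sum, map_smul, hb, smul_smul, mul_comm]
    intro j
    rw [← congrFun (b.repr_sum_self fun j => μ j * b.repr w j) j, ← hfw, hw]
    simp
  refine ⟨b.repr w i, ?_⟩
  conv_lhs => rw [← b.sum_repr w]
  refine Finset.sum_eq_single i (fun j _ hji => ?_) (by simp)
  have : b.repr w j = 0 :=
    (mul_eq_zero.mp (by linear_combination hrepr j)).resolve_left
      (sub_ne_zero.mpr (hμ.ne hji))
  simp [this]

theorem exists_apply_eq_smul_of_commute {f g : End K V} (b : Basis ι K V) {μ : ι → K}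
    (hμ : Function.Injective μ) (hb : ∀ i, f (b i) = μ i • b i) (hfg : Commute g f) (i : ι) :
    ∃ c : K, g (b i) = c • b i :=
  exists_eq_smul_of_apply_eq_smul b hμ hb <| by
    rw [← Module.End.mul_apply, ← hfg.eq, Module.End.mul_apply, hb, map_smul]

end Module.End

namespace Matrix

variable {ι R : Type*} [Fintype ι] [DecidableEq ι]

theorem eq_one_of_mulVec_basis [CommSemiring R] {M : Matrix ι ι R} (b : Module.Basis ι R (ι → R))
    (h : ∀ i, M *ᵥ b i = b i) : M = 1 :=
  toLin'.injective <| b.ext fun i => by simp [toLin'_apply, h i]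

variable [Field R] [LinearOrder R] [IsStrictOrderedRing R]

theorem sq_eq_one_of_mulVec_eq_smul {P : Matrix ι ι R} (hP : Pᵀ * P = 1) {v : ι → R}
    (hv : v ≠ 0) {c : R} (h : P *ᵥ v = c • v) : c ^ 2 = 1 := by
  have hnorm : (P *ᵥ v) ⬝ᵥ (P *ᵥ v) = v ⬝ᵥ v := by
    rw [dotProduct_mulVec, ← vecMul_transpose, vecMul_vecMul, hP, vecMul_one]
  rw [h, smul_dotProduct, dotProduct_smul, smul_smul, smul_eq_mul] at hnorm
  have hvv : v ⬝ᵥ v ≠ 0 := dotProduct_self_eq_zero.not.mpr hv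
  rw [sq]
  exact mul_right_cancel₀ hvv (by rw [hnorm, one_mul])

theorem mul_self_eq_one_of_commute {A P : Matrix ι ι R} (hP : Pᵀ * P = 1) (hPA : Commute P A)
    {μ : ι → R} (hμ : Function.Injective μ) {v : ι → ι → R} (hv : ∀ i, v i ≠ 0)
    (hAv : ∀ i, A *ᵥ v i = μ i • v i) : P * P = 1 := by
  have heig : ∀ i, Module.End.HasEigenvector (toLinAlgEquiv' A) (μ i) (v i) := fun i =>
    ⟨Module.End.mem_eigenspace_iff.mpr (by rw [toLinAlgEquiv'_apply, hAv]), hv i⟩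
  let b : Module.Basis ι R (ι → R) := basisOfLinearIndependentOfCardEqFinrank' v
    (Module.End.eigenvectors_linearIndependent' _ μ hμ v heig) (by simp)
  have hb : ⇑b = v := coe_basisOfLinearIndependentOfCardEqFinrank' ..
  refine eq_one_of_mulVec_basis b fun i => ?_
  obtain ⟨c, hc⟩ := Module.End.exists_apply_eq_smul_of_commute b hμ
    (fun i => by rw [hb, toLinAlgEquiv'_apply, hAv]) (hPA.map toLinAlgEquiv') i
  rw [hb, toLinAlgEquiv'_apply] at hc
  rw [hb, ← mulVec_mulVec, hc, mulVec_smul, hc, smul_smul, ← sq,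
    sq_eq_one_of_mulVec_eq_smul hP (hv i) hc, one_smul]

end Matrix

theorem stmt_14_general {n : ℕ} (A P : Matrix (Fin n) (Fin n) ℝ)
    (hdist : ∃ (lam : Fin n → ℝ) (v : Fin n → Fin n → ℝ),
      Function.Injective lam ∧ ∀ i, v i ≠ 0 ∧ A *ᵥ v i = lam i • v i)
    (hP : IsPermMatrix P) (haut : P * A * Pᵀ = A) :
    Pᵀ = P ∧ P * P = 1 := by
  obtain ⟨μ, v, hμ, hv⟩ := hdist
  have horth : Pᵀ * P = 1 := hP.transpose_mul_self
  have hPA : Commute P A := by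
    calc P * A = P * A * (Pᵀ * P) := by rw [horth, Matrix.mul_one]
      _ = A * P := by rw [← Matrix.mul_assoc, haut]
  have hPP : P * P = 1 :=
    mul_self_eq_one_of_commute horth hPA hμ (fun i => (hv i).1) fun i => (hv i).2
  exact ⟨left_inv_eq_right_inv horth hPP, hPP⟩

theorem stmt_14 {n : ℕ} (A P : Matrix (Fin n) (Fin n) ℝ)
    (hA : A.IsSymm)
    (hdist : ∃ (lam : Fin n → ℝ) (v : Fin n → Fin n → ℝ),
      Function.Injective lam ∧ ∀ i, v i ≠ 0 ∧ A *ᵥ v i = lam i • v i)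
    (hP : IsPermMatrix P) (haut : P * A * Pᵀ = A) :
    Pᵀ = P ∧ P * P = 1 :=
  stmt_14_general A P hdist hP haut
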